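/- The sylvester classes are the fibers of binary search tree insertion: for all words u, v over the positive integers, u ≡_sylv v if and only if the binary search trees obtained by inserting the letters of u and of v from right to left are equal. -/

import Mathlib

open scoped Classical

/-- Words over the positive integers. -/
abbrev Word : Type := List ℕ+

/-- Evaluation of a word: number of occurrences of each letter. -/
def ev (w : Word) : ℕ+ → ℕ := fun a => w.count a

/-- A monoid congruence on the free monoid `(ℕ⁺)*`. -/
def IsCongruence (r : Word → Word → Prop) : Prop :=
  Equivalence r ∧ ∀ u v u' v', r u v → r u' v' → r (u ++ u') (v ++ v')

/-- Restriction of a word to the letters belonging to a set `I`. -/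
noncomputable def restrictTo (I : Set ℕ+) (w : Word) : Word :=
  w.filter fun a => decide (a ∈ I)

/-- `I` is an interval (order-convex subset) of `ℕ⁺`. -/
def IsIntervalSet (I : Set ℕ+) : Prop :=
  ∀ ⦃a b c : ℕ+⦄, a ∈ I → c ∈ I → a ≤ b → b ≤ c → b ∈ I

/-- Compatibility with restriction to alphabet intervals. -/
def CompatRestrict (r : Word → Word → Prop) : Prop :=
  ∀ I : Set ℕ+, IsIntervalSet I → ∀ u v, r u v → r (restrictTo I u) (restrictTo I v)

/-- `r` is a `φ`-congruence. -/
def IsPhiCongruence (φ : Word → Word) (r : Word → Word → Prop) : Prop :=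
  ∀ u v, r u v ↔ (r (φ u) (φ v) ∧ ev u = ev v)

/-- Standardization. -/
def std (w : Word) : Word :=
  (List.range w.length).map fun i =>
    ⟨((List.range w.length).countP fun j =>
        decide (w.getD j 1 < w.getD i 1 ∨ (w.getD j 1 = w.getD i 1 ∧ j < i))) + 1,
      Nat.succ_pos _⟩

/-- Packing. -/
def pack (w : Word) : Word :=
  w.map fun a => ⟨(w.dedup.countP fun b => decide (b < a)) + 1, Nat.succ_pos _⟩

theorem parkBad_ex (w : Word) :
    ∃ d : ℕ, 1 ≤ d ∧ (w.countP fun a : ℕ+ => decide ((a : ℕ) ≤ d)) < d :=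
  ⟨w.length + 1, Nat.succ_le_succ (Nat.zero_le _), by
    have h : (w.countP fun a : ℕ+ => decide ((a : ℕ) ≤ w.length + 1)) ≤ w.length :=
      List.countP_le_length
    omega⟩

/-- The smallest `d ≥ 1` such that fewer than `d` letters of `w` are `≤ d`. -/
noncomputable def parkBad (w : Word) : ℕ := Nat.find (parkBad_ex w)

/-- One pass of the parkization procedure, with fuel. -/
noncomputable def parkAux : ℕ → Word → Word
  | 0, w => w
  | f + 1, w =>
    if parkBad w ≤ w.length then
      parkAux f (w.map fun a : ℕ+ => if parkBad w < (a : ℕ) then (a - 1 : ℕ+) else a)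
    else w

/-- Parkization. The fuel `(sum of the letters)` always suffices,
since every pass strictly decreases the sum of the letters. -/
noncomputable def park (w : Word) : Word := parkAux (w.map fun a => (a : ℕ)).sum w

/-- Smallest monoid congruence containing `base`. -/
def CongClosure (base : Word → Word → Prop) (u v : Word) : Prop :=
  ∀ r : Word → Word → Prop, IsCongruence r → (∀ x y, base x y → r x y) → r u v

def sylvBase (x y : Word) : Prop :=
  ∃ (a b c : ℕ+) (v : Word), a ≤ b ∧ b < c ∧
    x = a :: c :: (v ++ [b]) ∧ y = c :: a :: (v ++ [b])

/-- The sylvester congruence. -/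
def sylv : Word → Word → Prop := CongClosure sylvBase

def stalBase (x y : Word) : Prop :=
  ∃ (a b : ℕ+) (v : Word), x = b :: a :: (v ++ [b]) ∧ y = a :: b :: (v ++ [b])

/-- The stalactic congruence. -/
def stal : Word → Word → Prop := CongClosure stalBase

def sylvSharpBase (x y : Word) : Prop :=
  ∃ (a b c : ℕ+) (v : Word), a < b ∧ b ≤ c ∧
    x = b :: (v ++ [a, c]) ∧ y = b :: (v ++ [c, a])

/-- The #-sylvester congruence. -/
def sylvSharp : Word → Word → Prop := CongClosure sylvSharpBase

/-- The taïga congruence: join of the sylvester and stalactic congruences. -/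
def taiga : Word → Word → Prop := CongClosure fun u v => sylv u v ∨ stal u v

/-- Planar binary trees with letter labels. -/
inductive BT : Type where
  | leaf : BT
  | node : BT → ℕ+ → BT → BT
deriving DecidableEq

/-- Binary search tree insertion of a letter. -/
def BT.insert : BT → ℕ+ → BT
  | .leaf, l => .node .leaf l .leaf
  | .node L b R, l => if l ≤ b then .node (L.insert l) b R else .node L b (R.insert l)

/-- Binary search tree of a word: insert the letters from right to left. -/
def bst (w : Word) : BT := w.foldr (fun l t => t.insert l) .leaf

/-- Planar binary trees labelled by a letter and a multiplicity. -/
inductive BSTM : Type where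
  | leaf : BSTM
  | node : BSTM → ℕ+ → ℕ+ → BSTM → BSTM   -- left, letter, multiplicity, right
deriving DecidableEq

/-- Insertion of a letter into a binary search tree with multiplicities. -/
def BSTM.insert : BSTM → ℕ+ → BSTM
  | .leaf, l => .node .leaf l 1 .leaf
  | .node L l' k R, l =>
    if l = l' then .node L l' (k + 1) R
    else if l < l' then .node (L.insert l) l' k R
    else .node L l' k (R.insert l)

/-- The `P`-symbol: insert the letters of `w` from right to left. -/
def Pmap (w : Word) : BSTM := w.foldr (fun l t => t.insert l) .leaf

/-- Letters of a BSTM in left-to-right (infix) order. -/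
def BSTM.letters : BSTM → List ℕ+
  | .leaf => []
  | .node L l _ R => L.letters ++ l :: R.letters

/-- The binary search tree property for a BSTM. -/
def BSTM.IsSearchTree : BSTM → Prop
  | .leaf => True
  | .node L l _ R =>
      (∀ x ∈ L.letters, x < l) ∧ (∀ x ∈ R.letters, l < x) ∧
        L.IsSearchTree ∧ R.IsSearchTree

/-- Total multiplicity of a letter in a BSTM. -/
def BSTM.mult : BSTM → ℕ+ → ℕ
  | .leaf, _ => 0
  | .node L l k R, a => L.mult a + (if a = l then (k : ℕ) else 0) + R.mult a

/-- Size of a BSTM: sum of the multiplicities. -/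
def BSTM.size : BSTM → ℕ
  | .leaf => 0
  | .node L _ k R => L.size + (k : ℕ) + R.size

/-- Planar binary trees with multiplicities. -/
inductive BTM : Type where
  | leaf : BTM
  | node : BTM → ℕ+ → BTM → BTM
deriving DecidableEq

/-- Size of a BTM: sum of the multiplicities. -/
def BTM.size : BTM → ℕ
  | .leaf => 0
  | .node L k R => L.size + (k : ℕ) + R.size

/-- Number of nodes of a BTM. -/
def BTM.numNodes : BTM → ℕ
  | .leaf => 0
  | .node L _ R => L.numNodes + 1 + R.numNodes

/-- Forgetting the letters of a BSTM gives a BTM. -/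
def forgetLetters : BSTM → BTM
  | .leaf => .leaf
  | .node L _ k R => .node (forgetLetters L) k (forgetLetters R)

/-- The `B`-symbol: the BTM underlying `P(w)`. -/
def Bmap (w : Word) : BTM := forgetLetters (Pmap w)

/-- A packed word: its set of letters is `{1, …, k}` for some `k`. -/
def IsPacked (w : Word) : Prop := ∀ a ∈ w, ∀ b : ℕ+, b ≤ a → b ∈ w

/-- Number of packed words inserting to the BTM `T`. -/
noncomputable def fT (T : BTM) : ℕ :=
  Set.ncard {w : Word | IsPacked w ∧ Bmap w = T}

/-- The hook-type product over the subtrees of a BTM. -/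
def hookProd : BTM → ℕ
  | .leaf => 1
  | .node L k R =>
      (BTM.node L k R).size * ((k : ℕ) - 1).factorial * hookProd L * hookProd R

/-- Label the nodes of a BTM in infix order starting from a given letter;
returns the labelled tree and the next unused letter. -/
def infixLabelAux : BTM → ℕ+ → BSTM × ℕ+
  | .leaf, n => (.leaf, n)
  | .node L k R, n =>
    let p := infixLabelAux L n
    let q := infixLabelAux R (p.2 + 1)
    (.node p.1 p.2 k q.1, q.2)

/-- Label the nodes of a BTM by `1, …, k` in infix order. -/
def infixLabel (T : BTM) : BSTM := (infixLabelAux T 1).1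


/-!
`bst` is invariant under the sylvester relations: in a tree containing `b`, the insertion
paths of letters `a ≤ b < c` separate at or above the node `b`, so inserting `a` and `c`
commutes. As `bst (u ++ w)` is obtained from `bst w` by inserting the letters of `u`, the pairs
`(u, v)` with `bst (u ++ w) = bst (v ++ w)` for all `w` form a congruence containing the
sylvester relations.

Conversely, every word is sylvester-equivalent to the postorder reading of its tree.
Inserting a letter `a > b` into a tree with root `b` is realised on postorder readings by moving
`a` to the right across the reading of the left subtree: all those letters are `≤ b`, and the
reading ends with `b`, so each step is a sylvester relation.
-/

theorem CongClosure.isCongruence {base : Word → Word → Prop} :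
    IsCongruence (CongClosure base) :=
  ⟨⟨fun u _ hr _ => hr.1.refl u, fun h r hr hb => hr.1.symm (h r hr hb),
      fun h₁ h₂ r hr hb => hr.1.trans (h₁ r hr hb) (h₂ r hr hb)⟩,
    fun _ _ _ _ h₁ h₂ r hr hb => hr.2 _ _ _ _ (h₁ r hr hb) (h₂ r hr hb)⟩

theorem CongClosure.of_base {base : Word → Word → Prop} {u v : Word} (h : base u v) :
    CongClosure base u v :=
  fun _ _ hb => hb u v h

/-- The syntactic congruence of the right-to-left automaton `w ↦ w.foldr g s`. -/
theorem isCongruence_foldr_append_eq {β : Type*} (g : ℕ+ → β → β) (s : β) :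
    IsCongruence fun u v => ∀ w : Word, (u ++ w).foldr g s = (v ++ w).foldr g s := by
  refine ⟨⟨fun _ _ => rfl, fun h w => (h w).symm, fun h₁ h₂ w => (h₁ w).trans (h₂ w)⟩, ?_⟩
  intro u v u' v' h h' w
  calc ((u ++ u') ++ w).foldr g s = u.foldr g ((u' ++ w).foldr g s) := by simp
    _ = u.foldr g ((v' ++ w).foldr g s) := by rw [h' w]
    _ = (v ++ (v' ++ w)).foldr g s := by rw [← List.foldr_append, h]
    _ = ((v ++ v') ++ w).foldr g s := by rw [List.append_assoc]

namespace BT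

def postorder : BT → Word
  | leaf => []
  | node L b R => L.postorder ++ R.postorder ++ [b]

def IsSearchTree : BT → Prop
  | leaf => True
  | node L b R =>
      (∀ x ∈ L.postorder, x ≤ b) ∧ (∀ x ∈ R.postorder, b < x) ∧
        L.IsSearchTree ∧ R.IsSearchTree

theorem mem_postorder_insert {t : BT} {l x : ℕ+} :
    x ∈ (t.insert l).postorder ↔ x = l ∨ x ∈ t.postorder := by
  induction t with
  | leaf => simp [BT.insert, postorder]
  | node L b R ihL ihR =>
    by_cases h : l ≤ b <;> simp [BT.insert, postorder, h, ihL, ihR] <;> tauto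

theorem IsSearchTree.insert {t : BT} (ht : t.IsSearchTree) (l : ℕ+) :
    (t.insert l).IsSearchTree := by
  induction t with
  | leaf => simp [BT.insert, IsSearchTree, postorder]
  | node L b R ihL ihR =>
    obtain ⟨hL, hR, hLs, hRs⟩ := ht
    by_cases h : l ≤ b
    · simp only [BT.insert, if_pos h]
      refine ⟨fun x hx => ?_, hR, ihL hLs, hRs⟩
      rcases mem_postorder_insert.1 hx with rfl | hx
      exacts [h, hL x hx]
    · simp only [BT.insert, if_neg h]
      refine ⟨hL, fun x hx => ?_, hLs, ihR hRs⟩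
      rcases mem_postorder_insert.1 hx with rfl | hx
      exacts [lt_of_not_ge h, hR x hx]

theorem IsSearchTree.insert_insert_comm {t : BT} (ht : t.IsSearchTree) {a y c : ℕ+}
    (hy : y ∈ t.postorder) (hay : a ≤ y) (hyc : y < c) :
    (t.insert c).insert a = (t.insert a).insert c := by
  induction t with
  | leaf => simp [postorder] at hy
  | node L b R ihL ihR =>
    obtain ⟨hL, hR, hLs, hRs⟩ := ht
    simp only [postorder, List.mem_append, List.mem_singleton] at hy
    by_cases hcb : c ≤ b
    · have hyL : y ∈ L.postorder := by
        rcases hy with (hy | hy) | rfl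
        · exact hy
        · exact absurd ((hR y hy).trans (hyc.trans_le hcb)) (lt_irrefl b)
        · exact absurd hyc (not_lt.2 hcb)
      simp [BT.insert, hcb, hay.trans (hyc.le.trans hcb), ihL hLs hyL]
    · by_cases hab : a ≤ b
      · simp [BT.insert, hcb, hab]
      · have hyR : y ∈ R.postorder := by
          rcases hy with (hy | hy) | rfl
          · exact absurd ((hL y hy).trans_lt ((lt_of_not_ge hab).trans_le hay)) (lt_irrefl y)
          · exact hy
          · exact absurd hay hab
        simp [BT.insert, hcb, hab, ihR hRs hyR]

end BT

theorem isSearchTree_bst (w : Word) : (bst w).IsSearchTree := by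
  induction w with
  | nil => trivial
  | cons a w ih => exact ih.insert a

theorem mem_postorder_bst {w : Word} {x : ℕ+} : x ∈ (bst w).postorder ↔ x ∈ w := by
  induction w with
  | nil => simp [bst, BT.postorder]
  | cons a w ih => simp [bst, BT.mem_postorder_insert, ← ih]

theorem bst_eq_of_sylv {u v : Word} (h : sylv u v) : bst u = bst v := by
  have key := h _ (isCongruence_foldr_append_eq (fun l t => BT.insert t l) .leaf) (by
    rintro _ _ ⟨a, b, c, s, hab, hbc, rfl, rfl⟩ w
    exact (isSearchTree_bst _).insert_insert_comm (mem_postorder_bst.2 (by simp)) hab hbc)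
  simpa [bst] using key []

theorem isCongruence_sylv : IsCongruence sylv := CongClosure.isCongruence

theorem sylv_append_append {u v : Word} (p s : Word) (h : sylv u v) :
    sylv (p ++ u ++ s) (p ++ v ++ s) :=
  isCongruence_sylv.2 _ _ _ _ (isCongruence_sylv.2 _ _ _ _ (isCongruence_sylv.1.refl p) h)
    (isCongruence_sylv.1.refl s)

theorem sylv_cons_append_append_singleton {a b : ℕ+} (hba : b < a) {p : Word}
    (hp : ∀ x ∈ p, x ≤ b) (q : Word) :
    sylv (a :: (p ++ q ++ [b])) (p ++ a :: q ++ [b]) := by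
  induction p with
  | nil => exact isCongruence_sylv.1.refl _
  | cons x p ih =>
    have hswap : sylv (a :: x :: (p ++ q ++ [b])) (x :: a :: (p ++ q ++ [b])) :=
      isCongruence_sylv.1.symm
        (CongClosure.of_base ⟨x, b, a, p ++ q, hp x (by simp), hba, rfl, rfl⟩)
    have hmove : sylv (x :: a :: (p ++ q ++ [b])) (x :: (p ++ a :: q ++ [b])) := by
      simpa using sylv_append_append [x] [] (ih fun y hy => hp y (by simp [hy]))
    simpa using isCongruence_sylv.1.trans hswap hmove

theorem sylv_cons_postorder {t : BT} (ht : t.IsSearchTree) (a : ℕ+) :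
    sylv (a :: t.postorder) (t.insert a).postorder := by
  induction t with
  | leaf => exact isCongruence_sylv.1.refl _
  | node L b R ihL ihR =>
    obtain ⟨hL, hR, hLs, hRs⟩ := ht
    by_cases hab : a ≤ b
    · simpa [BT.insert, BT.postorder, hab] using
        sylv_append_append [] (R.postorder ++ [b]) (ihL hLs)
    · simpa [BT.insert, BT.postorder, hab] using isCongruence_sylv.1.trans
        (sylv_cons_append_append_singleton (lt_of_not_ge hab) hL R.postorder)
        (sylv_append_append L.postorder [b] (ihR hRs))

theorem sylv_postorder_bst (w : Word) : sylv w (bst w).postorder := by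
  induction w with
  | nil => exact isCongruence_sylv.1.refl _
  | cons a w ih =>
    have hcons : sylv (a :: w) (a :: (bst w).postorder) := by
      simpa using sylv_append_append [a] [] ih
    exact isCongruence_sylv.1.trans hcons (sylv_cons_postorder (isSearchTree_bst w) a)

theorem sylv_iff_bst_eq (u v : Word) : sylv u v ↔ bst u = bst v := by
  refine ⟨bst_eq_of_sylv, fun h => ?_⟩
  have hu := sylv_postorder_bst u
  rw [h] at hu
  exact isCongruence_sylv.1.trans hu (isCongruence_sylv.1.symm (sylv_postorder_bst v))
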